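/- Let g : ℝ → ℝ be continuously differentiable with g'(x) > 0 for all x, lim_{x→−∞} g(x) = 0, lim_{x→+∞} g(x) = 1, g(x) + g(−x) = 1 for all real x, and lim_{x→−∞} g'(x) = 0; let g⁻¹ : (0,1) → ℝ be the inverse of g. Then for every M > 0 there exists p₀ ∈ (0,1) such that for every p ∈ (0, p₀) there exists q ∈ (0,1) for which the absolute value of the derivative of the map r ↦ g( g⁻¹(r) + g⁻¹(q) ) at r = p is strictly greater than M. -/

import Mathlib

/-!
Take `q = g (-g⁻¹ p)`, so that `g⁻¹ p + g⁻¹ q = 0`. By the chain rule and the inverse function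
rule, the derivative of `r ↦ g (g⁻¹ r + g⁻¹ q)` at `p` is then `g' 0 / g' (g⁻¹ p)`, which exceeds
`M` as soon as `g' (g⁻¹ p) < g' 0 / M`. Since `g' → 0` at `-∞`, this holds for all small `p`.
-/

open Filter Set Topology

lemma StrictMono.mem_Ioo_of_tendsto {g : ℝ → ℝ} {a b : ℝ} (hg : StrictMono g)
    (hbot : Tendsto g atBot (𝓝 a)) (htop : Tendsto g atTop (𝓝 b)) (x : ℝ) : g x ∈ Ioo a b :=
  ⟨(le_of_tendsto hbot ((eventually_le_atBot (x - 1)).mono fun _ h => hg.monotone h)).trans_lt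
      (hg (by linarith)),
    (hg (by linarith : x < x + 1)).trans_le
      (ge_of_tendsto htop ((eventually_ge_atTop (x + 1)).mono fun _ h => hg.monotone h))⟩

section LeftInverse

variable {g ginv : ℝ → ℝ} {p : ℝ}

lemma StrictMono.continuousAt_of_leftInverse (hg : StrictMono g)
    (hgc : ContinuousAt g (ginv p)) (hleft : Function.LeftInverse ginv g)
    (hright : ∀ᶠ y in 𝓝 p, g (ginv y) = y) : ContinuousAt ginv p := by
  have hs : {y | g (ginv y) = y} ∈ 𝓝 p := hright
  have hmono : MonotoneOn ginv {y | g (ginv y) = y} := fun y hy z hz hyz =>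
    hg.le_iff_le.1 (by rwa [hy, hz])
  refine continuousAt_of_monotoneOn_of_image_mem_nhds hmono hs ?_
  have hpre : g ⁻¹' {y | g (ginv y) = y} ∈ 𝓝 (ginv p) := hgc.preimage_mem_nhds (by
    rwa [(hright.self_of_nhds : g (ginv p) = p)])
  exact mem_of_superset hpre fun x hx => ⟨g x, hx, hleft x⟩

lemma StrictMono.hasDerivAt_of_leftInverse {g' : ℝ} (hg : StrictMono g)
    (hd : HasDerivAt g g' (ginv p)) (hg' : g' ≠ 0) (hleft : Function.LeftInverse ginv g)
    (hright : ∀ᶠ y in 𝓝 p, g (ginv y) = y) : HasDerivAt ginv g'⁻¹ p :=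
  hd.of_local_left_inverse (hg.continuousAt_of_leftInverse hd.continuousAt hleft hright) hg' hright

end LeftInverse

theorem stmt_5_general (g ginv : ℝ → ℝ)
    (hpos : ∀ x : ℝ, 0 < deriv g x)
    (hbot : Tendsto g atBot (nhds 0)) (htop : Tendsto g atTop (nhds 1))
    (hderiv0 : Tendsto (deriv g) atBot (nhds 0))
    (hleft : ∀ x : ℝ, ginv (g x) = x)
    (hright : ∀ y ∈ Ioo (0 : ℝ) 1, g (ginv y) = y) :
    ∀ M > (0 : ℝ), ∃ p₀ ∈ Ioo (0 : ℝ) 1, ∀ p ∈ Ioo (0 : ℝ) p₀, ∃ q ∈ Ioo (0 : ℝ) 1,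
      |deriv (fun r : ℝ => g (ginv r + ginv q)) p| > M := by
  intro M hM
  have hmono : StrictMono g := strictMono_of_deriv_pos hpos
  have hg : ∀ x, HasDerivAt g (deriv g x) x := fun x =>
    (differentiableAt_of_deriv_ne_zero (hpos x).ne').hasDerivAt
  obtain ⟨B, hB⟩ := eventually_atBot.1 (hderiv0.eventually_lt_const (div_pos (hpos 0) hM))
  have hrange : ∀ x, g x ∈ Ioo (0 : ℝ) 1 := hmono.mem_Ioo_of_tendsto hbot htop
  refine ⟨g B, hrange B, fun p hp => ?_⟩
  have hp1 : p ∈ Ioo (0 : ℝ) 1 := ⟨hp.1, hp.2.trans (hrange B).2⟩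
  set x₀ := ginv p
  have hx₀ : x₀ ≤ B := (hmono.lt_iff_lt.1 (by rw [hright p hp1]; exact hp.2)).le
  have hginv : HasDerivAt ginv (deriv g x₀)⁻¹ p := hmono.hasDerivAt_of_leftInverse (hg x₀)
    (hpos x₀).ne' hleft (eventually_of_mem (Ioo_mem_nhds hp1.1 hp1.2) hright)
  refine ⟨g (-x₀), hrange _, ?_⟩
  have hzero : ginv p + ginv (g (-x₀)) = 0 := by rw [hleft]; ring
  have hchain : HasDerivAt (fun r => g (ginv r + ginv (g (-x₀)))) (deriv g 0 * (deriv g x₀)⁻¹) p :=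
    (by rw [hzero]; exact hg 0 : HasDerivAt g _ _).comp p (hginv.add_const _)
  rw [hchain.deriv, ← div_eq_mul_inv, abs_of_pos (div_pos (hpos 0) (hpos x₀)), gt_iff_lt,
    lt_div_iff₀ (hpos x₀)]
  have hsmall : deriv g x₀ * M < deriv g 0 := (lt_div_iff₀ hM).1 (hB x₀ hx₀)
  linarith [mul_comm M (deriv g x₀)]

/-- Analogue of Theorem 2.5 for `p_ik` near `0`: for any `M > 0` the probability
`p_ij = g(g⁻¹(p_ik) + g⁻¹(p_kj))` is `M`-sensitive to `p_ik` whenever `p_ik` is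
sufficiently small, for a suitable choice of `p_kj`. -/
theorem stmt_5 (g ginv : ℝ → ℝ)
    (hC1 : ContDiff ℝ 1 g) (hpos : ∀ x : ℝ, 0 < deriv g x)
    (hbot : Tendsto g atBot (nhds 0)) (htop : Tendsto g atTop (nhds 1))
    (hsymm : ∀ x : ℝ, g x + g (-x) = 1)
    (hderiv0 : Tendsto (deriv g) atBot (nhds 0))
    (hleft : ∀ x : ℝ, ginv (g x) = x)
    (hright : ∀ y ∈ Ioo (0 : ℝ) 1, g (ginv y) = y) :
    ∀ M > (0 : ℝ), ∃ p₀ ∈ Ioo (0 : ℝ) 1, ∀ p ∈ Ioo (0 : ℝ) p₀, ∃ q ∈ Ioo (0 : ℝ) 1,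
      |deriv (fun r : ℝ => g (ginv r + ginv q)) p| > M :=
  stmt_5_general g ginv hpos hbot htop hderiv0 hleft hright
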